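/- Let (X₁,d₁,ν₁) and (X₂,d₂,ν₂) be proper geodesic metric spaces equipped with Borel measures of full support which are finite on bounded sets, each satisfying the Bishop–Gromov inequality with parameters (K,N), where K ≤ 0 and 1 < N < ∞, and each satisfying the non-collapsing condition: there exist r₀, V₀, V₁ > 0 with V₀ ≤ νᵢ(B(x,r₀)) ≤ V₁ for all x ∈ Xᵢ (i = 1,2). Fix basepoints x₁ ∈ X₁ and x₂ ∈ X₂. If X₁ and X₂ are roughly isometric, then X₁ has polynomial volume growth if and only if X₂ does, and X₁ has exponential volume growth if and only if X₂ does. -/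

import Mathlib

open MeasureTheory Metric

/-- The model volume density `S_K^N` for `K ≤ 0`, `1 < N < ∞`. -/
noncomputable def SKN (K N t : ℝ) : ℝ :=
  if K = 0 then t ^ (N - 1)
  else Real.sinh (Real.sqrt (|K| / (N - 1)) * t) ^ (N - 1)

/-- A Borel measure `ν` of full support satisfies the Bishop–Gromov inequality with
parameters `(K, N)` if for every `x` the function
`r ↦ ν(B(x,r)) / ∫₀^r S_K^N(t) dt` is nonincreasing on `(0, ∞)`. -/
def BishopGromov {X : Type*} [MetricSpace X] [MeasurableSpace X]
    (ν : Measure X) (K N : ℝ) : Prop :=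
  ∀ x : X, AntitoneOn
    (fun r => (ν (ball x r)).toReal / ∫ t in (0:ℝ)..r, SKN K N t) (Set.Ioi 0)

/-- A metric space is geodesic if every pair of points is joined by a geodesic
(an isometric image of a real interval). -/
def IsGeodesicSpace (X : Type*) [MetricSpace X] : Prop :=
  ∀ x y : X, ∃ f : ℝ → X, f 0 = x ∧ f (dist x y) = y ∧
    ∀ s ∈ Set.Icc (0:ℝ) (dist x y), ∀ t ∈ Set.Icc (0:ℝ) (dist x y),
      dist (f s) (f t) = |s - t|

/-- `f` is a rough isometry from `(α, dX)` to `(β, dY)`: there are `a ≥ 1`, `b ≥ 0` with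
`(1/a)·dX x₁ x₂ − b ≤ dY (f x₁) (f x₂) ≤ a·dX x₁ x₂ + b`, and `f` is `ε₁`-full for
some `ε₁ > 0`. -/
def IsRoughIsometry {α β : Type*} (dX : α → α → ℝ) (dY : β → β → ℝ) (f : α → β) : Prop :=
  (∃ a : ℝ, 1 ≤ a ∧ ∃ b : ℝ, 0 ≤ b ∧ ∀ x₁ x₂ : α,
    (1 / a) * dX x₁ x₂ - b ≤ dY (f x₁) (f x₂) ∧
    dY (f x₁) (f x₂) ≤ a * dX x₁ x₂ + b) ∧
  ∃ ε₁ > (0:ℝ), ∀ y : β, ∃ x : α, dY y (f x) ≤ ε₁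

/-- A metric measure space with basepoint `x₀` has polynomial volume growth if
`ν(B(x₀,r)) ≤ C·r^k` for all sufficiently large `r`. -/
def VolumePolyGrowth {X : Type*} [MetricSpace X] [MeasurableSpace X]
    (ν : Measure X) (x₀ : X) : Prop :=
  ∃ C > (0:ℝ), ∃ k > (0:ℝ), ∃ r₁ > (0:ℝ), ∀ r : ℝ, r₁ ≤ r →
    (ν (ball x₀ r)).toReal ≤ C * r ^ k

/-- A metric measure space with basepoint `x₀` has exponential volume growth if
`limsup_{r→∞} (1/r)·log ν(B(x₀,r)) > 0`. -/
def VolumeExpGrowth {X : Type*} [MetricSpace X] [MeasurableSpace X]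
    (ν : Measure X) (x₀ : X) : Prop :=
  0 < Filter.limsup (fun r : ℝ => Real.log (ν (ball x₀ r)).toReal / r) Filter.atTop

/-!
A rough isometry has a rough inverse, so it suffices to show
`ν₁(B(x₁, r)) ≤ C ν₂(B(x₂, A r + B))` for a rough isometry `f : X₁ → X₂`. Cover `B(x₁, r)` by the
`ε`-balls around a maximal `ε`-separated subset `S`. For `ε` large, `f` maps `S` to a
`2 r₀`-separated set near `B(x₂, A r)`, whose disjoint `r₀`-balls each have volume at least `V₀`;
this bounds `#S`. By Bishop–Gromov, every `ε`-ball has volume at most `V₁ · V(ε) / V(r₀)`, where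
`V(r) = ∫₀^r S_K^N`. Such comparisons transfer polynomial growth directly. For exponential growth
one also needs Bishop–Gromov to bound `log ν(B(x, r)) / r` from above: the `limsup` of a function
unbounded above is `0` in `ℝ`.
-/
open Filter Set Real
open scoped ENNReal NNReal

noncomputable def modelVolume (K N r : ℝ) : ℝ := ∫ t in (0:ℝ)..r, SKN K N t

section ModelVolume

variable {K N : ℝ}

lemma continuous_SKN (hN : 1 < N) : Continuous (SKN K N) := by
  have hN' : 0 ≤ N - 1 := by linarith
  by_cases hK : K = 0
  · rw [show SKN K N = fun t => t ^ (N - 1) from funext fun _ => if_pos hK]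
    exact continuous_id.rpow_const fun _ => Or.inr hN'
  · rw [show SKN K N = fun t => sinh (√(|K| / (N - 1)) * t) ^ (N - 1) from
      funext fun _ => if_neg hK]
    exact (continuous_sinh.comp (continuous_const.mul continuous_id)).rpow_const fun _ => Or.inr hN'

lemma SKN_pos (hN : 1 < N) {t : ℝ} (ht : 0 < t) : 0 < SKN K N t := by
  unfold SKN
  split_ifs with hK
  · exact rpow_pos_of_pos ht _
  · have hα : 0 < √(|K| / (N - 1)) := sqrt_pos.2 (div_pos (abs_pos.2 hK) (by linarith))
    exact rpow_pos_of_pos (sinh_pos_iff.2 (mul_pos hα ht)) _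

lemma exists_SKN_le_exp (hN : 1 < N) : ∃ c ≥ 0, ∀ t ≥ 0, SKN K N t ≤ exp (c * t) := by
  set α := √(|K| / (N - 1))
  have hα : 0 ≤ α := sqrt_nonneg _
  refine ⟨(α + 1) * (N - 1), by nlinarith, fun t ht => ?_⟩
  suffices ∀ b, 0 ≤ b → b ≤ exp ((α + 1) * t) → b ^ (N - 1) ≤ exp ((α + 1) * (N - 1) * t) by
    unfold SKN
    split_ifs
    · exact this t ht <| calc
        t ≤ exp t := by linarith [add_one_le_exp t]
        _ ≤ exp ((α + 1) * t) := exp_le_exp.2 (by nlinarith)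
    · refine this _ (sinh_nonneg_iff.2 (by positivity)) ?_
      calc sinh (α * t) ≤ exp (α * t) := by
            rw [sinh_eq]; linarith [exp_pos (α * t), exp_pos (-(α * t))]
        _ ≤ exp ((α + 1) * t) := exp_le_exp.2 (by nlinarith)
  intro b hb hbexp
  calc b ^ (N - 1) ≤ exp ((α + 1) * t) ^ (N - 1) := rpow_le_rpow hb hbexp (by linarith)
    _ = exp ((α + 1) * (N - 1) * t) := by rw [← exp_mul]; ring_nf

lemma modelVolume_pos (hN : 1 < N) {r : ℝ} (hr : 0 < r) : 0 < modelVolume K N r :=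
  intervalIntegral.intervalIntegral_pos_of_pos_on ((continuous_SKN hN).intervalIntegrable _ _)
    (fun _ ht => SKN_pos hN ht.1) hr

lemma exists_modelVolume_le_exp (hN : 1 < N) :
    ∃ c, ∀ r ≥ 0, modelVolume K N r ≤ exp (c * r) := by
  obtain ⟨c, hc, hSKN⟩ := exists_SKN_le_exp (K := K) hN
  refine ⟨c + 1, fun r hr => ?_⟩
  have hbound : ∀ t ∈ uIoc 0 r, ‖SKN K N t‖ ≤ exp (c * r) := by
    intro t ht
    rw [uIoc_of_le hr] at ht
    rw [norm_of_nonneg (SKN_pos hN ht.1).le]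
    exact (hSKN t ht.1.le).trans (exp_le_exp.2 (mul_le_mul_of_nonneg_left ht.2 hc))
  calc modelVolume K N r ≤ ‖modelVolume K N r‖ := le_norm_self _
    _ ≤ exp (c * r) * |r - 0| := intervalIntegral.norm_integral_le_of_norm_le_const hbound
    _ ≤ exp (c * r) * exp r := by
        rw [sub_zero, abs_of_nonneg hr]
        exact mul_le_mul_of_nonneg_left (by linarith [add_one_le_exp r]) (exp_pos _).le
    _ = exp ((c + 1) * r) := by rw [← exp_add]; ring_nf

end ModelVolume

lemma isBoundedUnder_log_div_of_le_exp {g : ℝ → ℝ} {C c : ℝ} (hg₀ : ∀ r, 0 ≤ g r)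
    (hg : ∀ᶠ r in atTop, g r ≤ C * exp (c * r)) :
    IsBoundedUnder (· ≤ ·) atTop fun r => log (g r) / r := by
  refine isBoundedUnder_of_eventually_le (a := |log C| + |c|) ?_
  filter_upwards [hg, eventually_ge_atTop 1] with r hgr hr
  have hr0 : 0 < r := by linarith
  rcases le_or_gt (g r) 1 with hle | hlt
  · exact (div_nonpos_of_nonpos_of_nonneg (log_nonpos (hg₀ r) hle) hr0.le).trans (by positivity)
  · have hC : 0 < C := pos_of_mul_pos_left (by linarith) (exp_pos _).le
    have hlog : log (g r) ≤ log C + c * r := by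
      calc log (g r) ≤ log (C * exp (c * r)) := log_le_log (by linarith) hgr
        _ = log C + c * r := by rw [log_mul hC.ne' (exp_pos _).ne', log_exp]
    rw [div_le_iff₀ hr0]
    nlinarith [le_abs_self (log C), le_abs_self c, abs_nonneg (log C), abs_nonneg c]

namespace BishopGromov

variable {X : Type*} [MetricSpace X] [MeasurableSpace X] {ν : Measure X} {K N : ℝ}

lemma measure_ball_le (hBG : BishopGromov ν K N) (hN : 1 < N) {r s : ℝ} (hr : 0 < r)
    (hrs : r ≤ s) (p : X) :
    (ν (ball p s)).toReal ≤ (ν (ball p r)).toReal * (modelVolume K N s / modelVolume K N r) := by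
  have hs : 0 < modelVolume K N s := modelVolume_pos hN (hr.trans_le hrs)
  have h : (ν (ball p s)).toReal / modelVolume K N s ≤
      (ν (ball p r)).toReal / modelVolume K N r := hBG p hr (hr.trans_le hrs) hrs
  calc (ν (ball p s)).toReal = (ν (ball p s)).toReal / modelVolume K N s * modelVolume K N s :=
        (div_mul_cancel₀ _ hs.ne').symm
    _ ≤ (ν (ball p r)).toReal / modelVolume K N r * modelVolume K N s :=
        mul_le_mul_of_nonneg_right h hs.le
    _ = _ := by ring

lemma exists_measure_closedBall_le (hBG : BishopGromov ν K N) (hN : 1 < N) {r₀ V₁ : ℝ}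
    (hr₀ : 0 < r₀) (hV₁ : 0 < V₁) (hnc : ∀ p, (ν (ball p r₀)).toReal ≤ V₁)
    (hbdd : ∀ s : Set X, Bornology.IsBounded s → ν s < ⊤) (s : ℝ) :
    ∃ V > 0, ∀ p, ν (closedBall p s) ≤ ENNReal.ofReal V := by
  set s' := max (s + 1) r₀
  have hratio : 0 < modelVolume K N s' / modelVolume K N r₀ :=
    div_pos (modelVolume_pos hN (hr₀.trans_le (le_max_right _ _))) (modelVolume_pos hN hr₀)
  refine ⟨V₁ * (modelVolume K N s' / modelVolume K N r₀), mul_pos hV₁ hratio, fun p => ?_⟩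
  calc ν (closedBall p s) ≤ ν (ball p s') :=
        measure_mono (closedBall_subset_ball (by linarith [le_max_left (s + 1) r₀]))
    _ = ENNReal.ofReal (ν (ball p s')).toReal :=
        (ENNReal.ofReal_toReal (hbdd _ isBounded_ball).ne).symm
    _ ≤ _ := ENNReal.ofReal_le_ofReal <|
        (hBG.measure_ball_le hN hr₀ (le_max_right _ _) p).trans
          (mul_le_mul_of_nonneg_right (hnc p) hratio.le)

lemma isBoundedUnder_log_measure_ball (hBG : BishopGromov ν K N) (hN : 1 < N) (x : X) :
    IsBoundedUnder (· ≤ ·) atTop fun r => log (ν (ball x r)).toReal / r := by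
  obtain ⟨c, hc⟩ := exists_modelVolume_le_exp (K := K) hN
  have h1 : 0 < modelVolume K N 1 := modelVolume_pos hN one_pos
  refine isBoundedUnder_log_div_of_le_exp (C := (ν (ball x 1)).toReal / modelVolume K N 1)
    (c := c) (fun _ => ENNReal.toReal_nonneg) ?_
  filter_upwards [eventually_ge_atTop 1] with r hr
  calc (ν (ball x r)).toReal
      ≤ (ν (ball x 1)).toReal * (modelVolume K N r / modelVolume K N 1) :=
        hBG.measure_ball_le hN one_pos hr x
    _ = (ν (ball x 1)).toReal / modelVolume K N 1 * modelVolume K N r := by ring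
    _ ≤ _ := mul_le_mul_of_nonneg_left (hc r (by linarith)) (by positivity)

end BishopGromov

lemma exists_maximal_isSeparated {X : Type*} [PseudoEMetricSpace X] (ε : ℝ≥0∞) (s : Set X) :
    ∃ N, Maximal (fun N => N ⊆ s ∧ IsSeparated ε N) N :=
  zorn_subset {N | N ⊆ s ∧ IsSeparated ε N} fun c hc hchain =>
    ⟨⋃₀ c, ⟨sUnion_subset fun _ hN => (hc hN).1,
      (pairwise_sUnion hchain.directedOn).2 fun _ hN => (hc hN).2⟩,
      fun _ => subset_sUnion_of_mem⟩

section Covering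

variable {X : Type*} [MetricSpace X] [MeasurableSpace X]

lemma measure_le_encard_mul_of_isCover {ν : Measure X} {ε : ℝ≥0} {s N : Set X}
    (hN : IsCover ε s N) (hNfin : N.Finite) {M : ℝ≥0∞} (hM : ∀ p, ν (closedBall p ε) ≤ M) :
    ν s ≤ N.encard * M :=
  calc ν s ≤ ν (⋃ p ∈ N, closedBall p ε) := measure_mono hN.subset_iUnion_closedBall
    _ ≤ ∑' p : N, ν (closedBall p ε) := measure_biUnion_le ν hNfin.countable _
    _ ≤ ∑' _ : N, M := ENNReal.tsum_le_tsum fun p => hM p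
    _ = N.encard * M := ENNReal.tsum_set_const N M

lemma encard_mul_le_measure_ball_of_isSeparated [OpensMeasurableSpace X] {μ : Measure X}
    {S : Set X} {y : X} {r₀ R : ℝ} {m : ℝ≥0∞} (hS : IsSeparated (.ofReal (2 * r₀)) S)
    (hSR : S ⊆ ball y R) (hm : ∀ q, m ≤ μ (ball q r₀)) :
    S.encard * m ≤ μ (ball y (R + r₀)) := by
  have hdisj : Pairwise fun p q : S => Disjoint (ball (p : X) r₀) (ball (q : X) r₀) := by
    intro p q hpq
    have h : ENNReal.ofReal (2 * r₀) < edist (p : X) q := hS p.2 q.2 (Subtype.coe_ne_coe.2 hpq)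
    rw [edist_dist, ENNReal.ofReal_lt_ofReal_iff'] at h
    exact ball_disjoint_ball (by linarith [h.1])
  calc S.encard * m = ∑' _ : S, m := (ENNReal.tsum_set_const S m).symm
    _ ≤ ∑' p : S, μ (ball (p : X) r₀) := ENNReal.tsum_le_tsum fun p => hm p
    _ ≤ μ (⋃ p : S, ball (p : X) r₀) :=
        tsum_meas_le_meas_iUnion_of_disjoint μ (fun _ => measurableSet_ball) hdisj
    _ ≤ μ (ball y (R + r₀)) := measure_mono <| iUnion_subset fun p =>
        ball_subset_ball' (by linarith [mem_ball.1 (hSR p.2)])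

end Covering

lemma measure_mul_le_of_separating {X Y : Type*} [MetricSpace X] [MeasurableSpace X]
    [MetricSpace Y] [MeasurableSpace Y] [OpensMeasurableSpace Y] {ν : Measure X}
    {μ : Measure Y} {g : X → Y} {ε : ℝ≥0} {r₀ R : ℝ} {s : Set X} {y : Y} {m M : ℝ≥0∞}
    (hr₀ : 0 < r₀) (hg : ∀ p q, ε < dist p q → 2 * r₀ < dist (g p) (g q))
    (hgs : MapsTo g s (ball y R)) (hM : ∀ p, ν (closedBall p ε) ≤ M)
    (hm : ∀ q, m ≤ μ (ball q r₀)) (hm0 : m ≠ 0) (hμ : μ (ball y (R + r₀)) ≠ ⊤) :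
    ν s * m ≤ M * μ (ball y (R + r₀)) := by
  obtain ⟨N, hN⟩ := exists_maximal_isSeparated (ε : ℝ≥0∞) s
  have hgN : ∀ p ∈ N, ∀ q ∈ N, p ≠ q → 2 * r₀ < dist (g p) (g q) := by
    intro p hp q hq hpq
    have h : (ε : ℝ≥0∞) < edist p q := hN.1.2 hp hq hpq
    rw [edist_nndist, ENNReal.coe_lt_coe, ← NNReal.coe_lt_coe, coe_nndist] at h
    exact hg p q h
  have hinj : InjOn g N := fun p hp q hq hpq => by
    by_contra hne
    linarith [hgN p hp q hq hne, dist_le_zero.2 hpq]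
  have hsep : IsSeparated (.ofReal (2 * r₀)) (g '' N) := by
    rintro _ ⟨p, hp, rfl⟩ _ ⟨q, hq, rfl⟩ hne
    have h := hgN p hp q hq (ne_of_apply_ne g hne)
    rw [edist_dist]
    exact (ENNReal.ofReal_lt_ofReal_iff (by linarith)).2 h
  have hpack : N.encard * m ≤ μ (ball y (R + r₀)) := by
    rw [← hinj.encard_image]
    exact encard_mul_le_measure_ball_of_isSeparated hsep
      (image_subset_iff.2 fun p hp => hgs (hN.1.1 hp)) hm
  have hNfin : N.Finite := by
    rw [← encard_ne_top_iff]
    intro htop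
    rw [htop, ENat.toENNReal_top, ENNReal.top_mul hm0] at hpack
    exact hμ (top_le_iff.1 hpack)
  calc ν s * m ≤ N.encard * M * m :=
        mul_le_mul_left (measure_le_encard_mul_of_isCover (.of_maximal_isSeparated hN) hNfin hM) m
    _ = M * (N.encard * m) := by ring
    _ ≤ M * μ (ball y (R + r₀)) := mul_le_mul_right hpack M

namespace IsRoughIsometry

variable {X Y : Type*} [MetricSpace X] [MetricSpace Y] {f : X → Y}

lemma exists_symm (hf : IsRoughIsometry dist dist f) :
    ∃ g : Y → X, IsRoughIsometry dist dist g := by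
  obtain ⟨⟨a, ha, b, hb, hab⟩, ε, hε, hfull⟩ := hf
  choose g hg using hfull
  have ha0 : 0 < a := by linarith
  have hlow : ∀ p q, dist p q ≤ a * (dist (f p) (f q) + b) := fun p q => by
    have h := (hab p q).1
    rwa [one_div_mul_eq_div, sub_le_iff_le_add, div_le_iff₀' ha0] at h
  have hfg : ∀ y y', dist y y' ≤ dist (f (g y)) (f (g y')) + 2 * ε ∧
      dist (f (g y)) (f (g y')) ≤ dist y y' + 2 * ε := fun y y' => by
    have h₁ := dist_triangle4 y (f (g y)) (f (g y')) y'
    have h₂ := dist_triangle4 (f (g y)) y y' (f (g y'))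
    rw [dist_comm (f (g y')) y'] at h₁
    rw [dist_comm (f (g y)) y] at h₂
    constructor <;> linarith [hg y, hg y']
  refine ⟨g, ⟨a, ha, a * (2 * ε + b), by positivity, fun y y' => ⟨?_, ?_⟩⟩,
    a * (ε + b), by positivity, fun x => ⟨f x, ?_⟩⟩
  · have hup := (hab (g y) (g y')).2
    have hsq : 2 * ε + b ≤ a * (a * (2 * ε + b)) := by
      rw [← mul_assoc]
      exact le_mul_of_one_le_left (by positivity) (one_le_mul_of_one_le_of_one_le ha ha)
    rw [one_div_mul_eq_div, sub_le_iff_le_add, div_le_iff₀' ha0]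
    nlinarith [(hfg y y').1]
  · calc dist (g y) (g y') ≤ a * (dist (f (g y)) (f (g y')) + b) := hlow _ _
      _ ≤ a * (dist y y' + 2 * ε + b) := by gcongr; linarith [(hfg y y').2]
      _ = a * dist y y' + a * (2 * ε + b) := by ring
  · calc dist x (g (f x)) ≤ a * (dist (f x) (f (g (f x))) + b) := hlow _ _
      _ ≤ a * (ε + b) := by gcongr; exact hg (f x)

lemma exists_measure_ball_le [MeasurableSpace X] [MeasurableSpace Y] [OpensMeasurableSpace Y]
    (hf : IsRoughIsometry dist dist f) {ν : Measure X} {μ : Measure Y} {r₀ V₀ : ℝ}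
    (hr₀ : 0 < r₀) (hV₀ : 0 < V₀) (hν : ∀ s, ∃ V > 0, ∀ p, ν (closedBall p s) ≤ ENNReal.ofReal V)
    (hμ : ∀ q, V₀ ≤ (μ (ball q r₀)).toReal) (hbdd : ∀ s : Set Y, Bornology.IsBounded s → μ s < ⊤)
    (x : X) (y : Y) :
    ∃ C > 0, ∃ A > 0, ∃ B ≥ 0, ∀ r,
      (ν (ball x r)).toReal ≤ C * (μ (ball y (A * r + B))).toReal := by
  obtain ⟨⟨a, ha, b, hb, hab⟩, -⟩ := hf
  have ha0 : 0 < a := by linarith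
  -- chosen so that points farther apart than `ε` have images farther apart than `2 r₀`
  let ε : ℝ≥0 := ⟨a * (2 * r₀ + b), by positivity⟩
  obtain ⟨V, hV, hVball⟩ := hν ε
  set B := b + dist (f x) y + 1 + r₀
  refine ⟨V / V₀, by positivity, a, ha0, B, by positivity, fun r => ?_⟩
  have hsep : ∀ p q, ε < dist p q → 2 * r₀ < dist (f p) (f q) := fun p q hpq => by
    have h := mul_lt_mul_of_pos_left (show a * (2 * r₀ + b) < dist p q from hpq) (one_div_pos.2 ha0)
    rw [← mul_assoc, one_div_mul_cancel ha0.ne', one_mul] at h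
    linarith [(hab p q).1]
  have hmaps : MapsTo f (ball x r) (ball y (a * r + B - r₀)) := fun p hp => by
    rw [mem_ball] at hp ⊢
    nlinarith [dist_triangle (f p) (f x) y, (hab p x).2]
  have hball : μ (ball y (a * r + B)) ≠ ⊤ := (hbdd _ isBounded_ball).ne
  have key := measure_mul_le_of_separating hr₀ hsep hmaps hVball
    (fun q => ENNReal.ofReal_le_of_le_toReal (hμ q)) (ENNReal.ofReal_pos.2 hV₀).ne'
    (by rwa [sub_add_cancel])
  rw [sub_add_cancel] at key
  have hreal := ENNReal.toReal_mono (ENNReal.mul_ne_top ENNReal.ofReal_ne_top hball) key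
  rw [ENNReal.toReal_mul, ENNReal.toReal_mul, ENNReal.toReal_ofReal hV₀.le,
    ENNReal.toReal_ofReal hV.le] at hreal
  rw [div_mul_eq_mul_div, le_div_iff₀ hV₀]
  exact hreal

end IsRoughIsometry

section Growth

variable {X Y : Type*} [MetricSpace X] [MeasurableSpace X] [MetricSpace Y] [MeasurableSpace Y]
  {ν : Measure X} {μ : Measure Y} {x : X} {y : Y} {C A B : ℝ}

lemma VolumePolyGrowth.of_le (h : VolumePolyGrowth ν x) (hC : 0 < C) (hA : 0 < A) (hB : 0 ≤ B)
    (hle : ∀ r, (μ (ball y r)).toReal ≤ C * (ν (ball x (A * r + B))).toReal) :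
    VolumePolyGrowth μ y := by
  obtain ⟨C₀, hC₀, k, hk, r₁, -, hpoly⟩ := h
  refine ⟨C * C₀ * (A + B) ^ k, by positivity, k, hk, max 1 (r₁ / A), by positivity,
    fun r hr => ?_⟩
  have hr1 : 1 ≤ r := (le_max_left _ _).trans hr
  have hr₁ : r₁ ≤ A * r := (div_le_iff₀' hA).1 ((le_max_right _ _).trans hr)
  calc (μ (ball y r)).toReal ≤ C * (ν (ball x (A * r + B))).toReal := hle r
    _ ≤ C * (C₀ * (A * r + B) ^ k) := by gcongr; exact hpoly _ (by linarith)
    _ ≤ C * (C₀ * ((A + B) * r) ^ k) := by gcongr; nlinarith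
    _ = C * C₀ * (A + B) ^ k * r ^ k := by rw [mul_rpow (by positivity) (by positivity)]; ring

lemma VolumeExpGrowth.of_le (h : VolumeExpGrowth ν x) (hC : 0 < C) (hA : 0 < A)
    (hle : ∀ r, (ν (ball x r)).toReal ≤ C * (μ (ball y (A * r + B))).toReal)
    (hμ : IsBoundedUnder (· ≤ ·) atTop fun r => log (μ (ball y r)).toReal / r) :
    VolumeExpGrowth μ y := by
  unfold VolumeExpGrowth at h ⊢
  set L := limsup (fun r => log (ν (ball x r)).toReal / r) atTop
  have hcobdd : IsCoboundedUnder (· ≤ ·) atTop fun r => log (ν (ball x r)).toReal / r := by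
    by_contra hne
    exact h.ne' (Real.limsup_of_not_isCoboundedUnder hne)
  set c := L / (2 * A)
  have hc : 0 < c := by positivity
  have hfreq : ∃ᶠ r in atTop,
      c * (A * r + B - B) - log C < log (μ (ball y (A * r + B))).toReal := by
    refine ((frequently_lt_of_lt_limsup hcobdd (half_lt_self h)).and_eventually
      (eventually_gt_atTop 0)).mono fun r ⟨hr, hr0⟩ => ?_
    rw [lt_div_iff₀ hr0] at hr
    have hν1 : 1 < (ν (ball x r)).toReal :=
      (log_pos_iff ENNReal.toReal_nonneg).1 (by nlinarith)
    have hμ0 : 0 < (μ (ball y (A * r + B))).toReal :=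
      (mul_pos_iff_of_pos_left hC).1 (by linarith [hle r])
    have hlog := log_le_log (by linarith) (hle r)
    rw [log_mul hC.ne' hμ0.ne'] at hlog
    have : c * (A * r + B - B) = L / 2 * r := by simp only [c, add_sub_cancel_right]; field_simp
    linarith
  have hfreqρ : ∃ᶠ ρ in atTop, c * (ρ - B) - log C < log (μ (ball y ρ)).toReal :=
    (tendsto_atTop_add_const_right _ B (tendsto_id.const_mul_atTop hA)).frequently
      (p := fun ρ => c * (ρ - B) - log C < log (μ (ball y ρ)).toReal) hfreq
  have hfreq' : ∃ᶠ ρ in atTop, c / 2 ≤ log (μ (ball y ρ)).toReal / ρ := by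
    refine (hfreqρ.and_eventually (eventually_ge_atTop (max 1 (2 * B + 2 * log C / c)))).mono
      fun ρ ⟨hρ, hρ₀⟩ => ?_
    have hρ1 : 1 ≤ ρ := (le_max_left _ _).trans hρ₀
    have hρB : 2 * B + 2 * log C / c ≤ ρ := (le_max_right _ _).trans hρ₀
    rw [le_div_iff₀ (by linarith)]
    have : c * (2 * B + 2 * log C / c) = 2 * (c * B + log C) := by field_simp
    nlinarith [mul_le_mul_of_nonneg_left hρB hc.le]
  exact (half_pos hc).trans_le (le_limsup_of_frequently_le hfreq' hμ)

end Growth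

theorem stmt_16_general {X₁ X₂ : Type*} [MetricSpace X₁]
    [MeasurableSpace X₁] [BorelSpace X₁]
    [MetricSpace X₂] [MeasurableSpace X₂] [BorelSpace X₂]
    (ν₁ : Measure X₁) (ν₂ : Measure X₂)
    (hbdd₁ : ∀ s : Set X₁, Bornology.IsBounded s → ν₁ s < ⊤)
    (hbdd₂ : ∀ s : Set X₂, Bornology.IsBounded s → ν₂ s < ⊤)
    (K N : ℝ) (hN : 1 < N)
    (hBG₁ : BishopGromov ν₁ K N) (hBG₂ : BishopGromov ν₂ K N)
    (r₀ V₀ V₁ : ℝ) (hr₀ : 0 < r₀) (hV₀ : 0 < V₀) (hV₁ : 0 < V₁)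
    (hnc₁ : ∀ x : X₁, V₀ ≤ (ν₁ (ball x r₀)).toReal ∧ (ν₁ (ball x r₀)).toReal ≤ V₁)
    (hnc₂ : ∀ x : X₂, V₀ ≤ (ν₂ (ball x r₀)).toReal ∧ (ν₂ (ball x r₀)).toReal ≤ V₁)
    (x₁ : X₁) (x₂ : X₂)
    (f : X₁ → X₂) (hf : IsRoughIsometry dist dist f) :
    (VolumePolyGrowth ν₁ x₁ ↔ VolumePolyGrowth ν₂ x₂) ∧
    (VolumeExpGrowth ν₁ x₁ ↔ VolumeExpGrowth ν₂ x₂) := by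
  obtain ⟨g, hg⟩ := hf.exists_symm
  obtain ⟨C₁, hC₁, A₁, hA₁, B₁, hB₁, h₁₂⟩ := hf.exists_measure_ball_le hr₀ hV₀
    (hBG₁.exists_measure_closedBall_le hN hr₀ hV₁ (fun p => (hnc₁ p).2) hbdd₁)
    (fun q => (hnc₂ q).1) hbdd₂ x₁ x₂
  obtain ⟨C₂, hC₂, A₂, hA₂, B₂, hB₂, h₂₁⟩ := hg.exists_measure_ball_le hr₀ hV₀
    (hBG₂.exists_measure_closedBall_le hN hr₀ hV₁ (fun p => (hnc₂ p).2) hbdd₂)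
    (fun q => (hnc₁ q).1) hbdd₁ x₂ x₁
  exact ⟨⟨fun h => h.of_le hC₂ hA₂ hB₂ h₂₁, fun h => h.of_le hC₁ hA₁ hB₁ h₁₂⟩,
    ⟨fun h => h.of_le hC₁ hA₁ h₁₂ (hBG₂.isBoundedUnder_log_measure_ball hN x₂),
      fun h => h.of_le hC₂ hA₂ h₂₁ (hBG₁.isBoundedUnder_log_measure_ball hN x₁)⟩⟩

theorem stmt_16 {X₁ X₂ : Type*} [MetricSpace X₁] [ProperSpace X₁]
    [MeasurableSpace X₁] [BorelSpace X₁]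
    [MetricSpace X₂] [ProperSpace X₂] [MeasurableSpace X₂] [BorelSpace X₂]
    (hgeo₁ : IsGeodesicSpace X₁) (hgeo₂ : IsGeodesicSpace X₂)
    (ν₁ : Measure X₁) (ν₂ : Measure X₂)
    (hfull₁ : ∀ x : X₁, ∀ r > (0:ℝ), 0 < ν₁ (ball x r))
    (hfull₂ : ∀ x : X₂, ∀ r > (0:ℝ), 0 < ν₂ (ball x r))
    (hbdd₁ : ∀ s : Set X₁, Bornology.IsBounded s → ν₁ s < ⊤)
    (hbdd₂ : ∀ s : Set X₂, Bornology.IsBounded s → ν₂ s < ⊤)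
    (K N : ℝ) (hK : K ≤ 0) (hN : 1 < N)
    (hBG₁ : BishopGromov ν₁ K N) (hBG₂ : BishopGromov ν₂ K N)
    (r₀ V₀ V₁ : ℝ) (hr₀ : 0 < r₀) (hV₀ : 0 < V₀) (hV₁ : 0 < V₁)
    (hnc₁ : ∀ x : X₁, V₀ ≤ (ν₁ (ball x r₀)).toReal ∧ (ν₁ (ball x r₀)).toReal ≤ V₁)
    (hnc₂ : ∀ x : X₂, V₀ ≤ (ν₂ (ball x r₀)).toReal ∧ (ν₂ (ball x r₀)).toReal ≤ V₁)
    (x₁ : X₁) (x₂ : X₂)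
    (f : X₁ → X₂) (hf : IsRoughIsometry dist dist f) :
    (VolumePolyGrowth ν₁ x₁ ↔ VolumePolyGrowth ν₂ x₂) ∧
    (VolumeExpGrowth ν₁ x₁ ↔ VolumeExpGrowth ν₂ x₂) :=
  stmt_16_general ν₁ ν₂ hbdd₁ hbdd₂ K N hN hBG₁ hBG₂ r₀ V₀ V₁ hr₀ hV₀ hV₁ hnc₁ hnc₂ x₁ x₂ f hf
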